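/- arXiv:2308.03242 — 2 statements merged into one kernel-verified Lean document; each statement's English description precedes it below -/
import Mathlib

section
/- Let p ≥ 2 be an integer, s > 0, C > 0, M > 0, and let {x_k}, {y_k}, {z_k} be sequences generated by the higher-order mirror descent x_{k+1} = (p/(k+p)) ∇φ*(z_k) + (k/(k+p)) y_k, z_{k+1} = z_k − C s p (k+1)^{(p−1)} ∇f(y_{k+1}), where each y_k satisfies ⟨∇f(y_k), x_k − y_k⟩ ≥ M s^{1/(p−1)} ‖∇f(y_k)‖_*^{p/(p−1)}, with x₀ = ∇φ*(z₀). If 0 < C ≤ σ M^{p−1} / ((p−1)^{p−1} p), then for every k ≥ 1, f(y_k) − f(x*) ≤ D_φ(x*, x₀) / (C s k^{(p)}). -/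
/-!
Along the iteration, the potential `A k * (f (y k) - f x*) + φ*(z k) - z k x*` with
`A k = C s k^{(p)}` is nonincreasing. Strong convexity of order `p` of `φ` makes `φ*` smooth of
order `p / (p - 1)`: by Young's inequality, `φ*(z') ≤ φ*(z) + (z' - z)(∇φ*(z)) +
(p-1)/p σ^{-1/(p-1)} ‖z' - z‖^{p/(p-1)}`. In one step, convexity of `f` turns the change of the
potential into `-A (k+1) ∇f(y)(x - y)` plus this smoothness error, and the condition on `y` beats
the error as soon as `C ≤ σ M^{p-1} / ((p-1)^{p-1} p)`. Since `A 0 = 0`,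
`φ*(z 0) = z 0 (x 0) - φ (x 0)` and `φ*(z k) - z k x* ≥ -φ x*` (Fenchel–Young), the rate follows.
-/

open Set Filter Topology

/-- The Fenchel conjugate of `φ`, as a function on the dual space. -/
noncomputable def fenchelDual {E : Type*} [NormedAddCommGroup E] [NormedSpace ℝ E]
    (φ : E → ℝ) (z : StrongDual ℝ E) : ℝ :=
  ⨆ x : E, (z x - φ x)

def IsSubgradientAt {E : Type*} [NormedAddCommGroup E] [NormedSpace ℝ E] (φ : E → ℝ)
    (g : StrongDual ℝ E) (u : E) : Prop :=
  ∀ v, φ u + g (v - u) ≤ φ v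

theorem young_inequality_of_nonneg_scaled {p : ℕ} (hp : 1 < p) {σ a t : ℝ} (hσ : 0 < σ)
    (ha : 0 ≤ a) (ht : 0 ≤ t) :
    a * t ≤ σ / p * t ^ p +
      ((p : ℝ) - 1) / p * σ ^ (-1 / ((p : ℝ) - 1)) * a ^ ((p : ℝ) / ((p : ℝ) - 1)) := by
  have hp' : (1 : ℝ) < p := by exact_mod_cast hp
  have hσp : σ ^ (1 / (p : ℝ)) * σ ^ (-1 / (p : ℝ)) = 1 := by
    rw [← Real.rpow_add hσ]; norm_num [neg_div]
  have hpq : (p : ℝ).HolderConjugate (p / (p - 1)) := .conjExponent hp'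
  have young := Real.young_inequality_of_nonneg (by positivity : 0 ≤ σ ^ (1 / (p : ℝ)) * t)
    (by positivity : 0 ≤ a * σ ^ (-1 / (p : ℝ))) hpq
  rw [Real.mul_rpow (by positivity) ht, Real.mul_rpow ha (by positivity), ← Real.rpow_mul hσ.le,
    ← Real.rpow_mul hσ.le, Real.rpow_natCast] at young
  calc a * t = σ ^ (1 / (p : ℝ)) * t * (a * σ ^ (-1 / (p : ℝ))) := by
        linear_combination (a * t) * hσp.symm
    _ ≤ _ := young
    _ = _ := by
      have e : -1 / (p : ℝ) * (p / (p - 1)) = -1 / (p - 1) := by field_simp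
      rw [e, one_div_mul_cancel (by positivity), Real.rpow_one]
      field_simp

theorem ConvexOn.isSubgradientAt_of_hasFDerivAt {E : Type*} [NormedAddCommGroup E]
    [NormedSpace ℝ E] {g : E → ℝ} {g' : StrongDual ℝ E} {x : E} (hg : ConvexOn ℝ univ g)
    (hd : HasFDerivAt g g' x) : IsSubgradientAt g g' x := fun w => by
  have hline : HasDerivAt (g ∘ AffineMap.lineMap (k := ℝ) x w) (g' (w - x)) 0 :=
    hd.comp_hasDerivAt_of_eq 0 (AffineMap.hasDerivAt_lineMap (a := x) (b := w)) (by simp)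
  have := (hg.comp_affineMap (AffineMap.lineMap (k := ℝ) x w)).le_slope_of_hasDerivAt
    (mem_univ 0) (mem_univ 1) zero_lt_one hline
  simp only [slope_def_field, Function.comp_apply, AffineMap.lineMap_apply_one,
    AffineMap.lineMap_apply_zero, sub_zero, div_one] at this
  linarith

section FenchelConjugate

variable {E : Type*} [NormedAddCommGroup E] [NormedSpace ℝ E] {φ : E → ℝ}

theorem fenchelDual_eq_of_isSubgradientAt {u : E} {g : StrongDual ℝ E}
    (hg : IsSubgradientAt φ g u) : fenchelDual φ g = g u - φ u := by
  have hle : ∀ v, g v - φ v ≤ g u - φ u := fun v => by linarith [hg v, map_sub g v u]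
  exact le_antisymm (ciSup_le hle) (le_ciSup ⟨_, forall_mem_range.2 hle⟩ u)

theorem bddAbove_range_apply_sub_of_growth {p : ℕ} (hp : 1 < p) {σ : ℝ} (hσ : 0 < σ) {x₀ : E}
    {g₀ : StrongDual ℝ E} (hφ : ∀ x, σ / p * ‖x - x₀‖ ^ p ≤ φ x - φ x₀ - g₀ (x - x₀))
    (w : StrongDual ℝ E) : BddAbove (range fun x => w x - φ x) := by
  refine ⟨w x₀ - φ x₀ + ((p : ℝ) - 1) / p * σ ^ (-1 / ((p : ℝ) - 1)) *
    ‖w - g₀‖ ^ ((p : ℝ) / ((p : ℝ) - 1)), forall_mem_range.2 fun x => ?_⟩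
  have hdual : (w - g₀) (x - x₀) ≤ ‖w - g₀‖ * ‖x - x₀‖ :=
    (le_abs_self _).trans ((w - g₀).le_opNorm _)
  have young := young_inequality_of_nonneg_scaled hp hσ (norm_nonneg (w - g₀))
    (norm_nonneg (x - x₀))
  simp only [sub_apply, map_sub] at hdual hφ ⊢
  linarith [hφ x]

theorem le_fenchelDual (hbdd : ∀ w : StrongDual ℝ E, BddAbove (range fun x => w x - φ x))
    (w : StrongDual ℝ E) (x : E) : w x - φ x ≤ fenchelDual φ w :=
  le_ciSup (hbdd w) x

theorem convexOn_fenchelDual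
    (hbdd : ∀ w : StrongDual ℝ E, BddAbove (range fun x => w x - φ x)) :
    ConvexOn ℝ univ (fenchelDual φ) := by
  refine ⟨convex_univ, fun z₁ _ z₂ _ a b ha hb hab => ciSup_le fun x => ?_⟩
  calc (a • z₁ + b • z₂) x - φ x = a * (z₁ x - φ x) + b * (z₂ x - φ x) := by
        simp only [add_apply, smul_apply, smul_eq_mul]
        linear_combination (φ x) * hab
    _ ≤ a * fenchelDual φ z₁ + b * fenchelDual φ z₂ := by
        gcongr <;> exact le_fenchelDual hbdd _ x

variable {G : StrongDual ℝ E → E} {φ' : E → StrongDual ℝ E}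

theorem fenchelDual_eq_apply_grad_sub (hsub : ∀ x, IsSubgradientAt φ (φ' x) x)
    (hbdd : ∀ w : StrongDual ℝ E, BddAbove (range fun x => w x - φ x))
    (hG : ∀ z, HasFDerivAt (fenchelDual φ) (NormedSpace.inclusionInDoubleDual ℝ E (G z)) z)
    (z : StrongDual ℝ E) : fenchelDual φ z = z (G z) - φ (G z) := by
  have hgrad := (convexOn_fenchelDual hbdd).isSubgradientAt_of_hasFDerivAt (hG z) (φ' (G z))
  rw [fenchelDual_eq_of_isSubgradientAt (hsub (G z)), NormedSpace.dual_def, sub_apply] at hgrad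
  exact le_antisymm (by linarith) (le_fenchelDual hbdd z (G z))

theorem isSubgradientAt_grad_fenchelDual (hsub : ∀ x, IsSubgradientAt φ (φ' x) x)
    (hbdd : ∀ w : StrongDual ℝ E, BddAbove (range fun x => w x - φ x))
    (hG : ∀ z, HasFDerivAt (fenchelDual φ) (NormedSpace.inclusionInDoubleDual ℝ E (G z)) z)
    (z : StrongDual ℝ E) : IsSubgradientAt φ z (G z) := fun v => by
  have := le_fenchelDual hbdd z v
  rw [fenchelDual_eq_apply_grad_sub hsub hbdd hG, map_sub] at *
  linarith

/-- The hypothesis only involves the selection `φ'`; comparing `u` and `v` with the point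
`u + t • (v - u)` and letting `t → 0` extends it to every subgradient. -/
theorem strongConvex_of_isSubgradientAt {p : ℕ} {σ : ℝ} (hσ : 0 ≤ σ)
    (hφsc : ∀ x y, σ / p * ‖x - y‖ ^ p ≤ φ x - φ y - φ' y (x - y)) {u : E}
    {g : StrongDual ℝ E} (hg : IsSubgradientAt φ g u) (v : E) :
    σ / p * ‖v - u‖ ^ p ≤ φ v - φ u - g (v - u) := by
  have hstep : ∀ t ∈ Ioo (0 : ℝ) 1,
      σ / p * (1 - t) ^ p * ‖v - u‖ ^ p ≤ φ v - φ u - g (v - u) := by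
    rintro t ⟨ht₀, ht₁⟩
    set m := u + t • (v - u)
    have hv := hφsc v m
    have hu := hφsc u m
    have hm := hg m
    rw [show v - m = (1 - t) • (v - u) by module, norm_smul, Real.norm_of_nonneg (by linarith),
      map_smul, smul_eq_mul, mul_pow] at hv
    rw [show u - m = (-t) • (v - u) by module, norm_smul, norm_neg, Real.norm_of_nonneg ht₀.le,
      map_smul, smul_eq_mul, mul_pow] at hu
    rw [show m - u = t • (v - u) by module, map_smul, smul_eq_mul] at hm
    have hpos : 0 ≤ (1 - t) * (σ / p * (t ^ p * ‖v - u‖ ^ p)) := by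
      have : 0 ≤ 1 - t := by linarith
      positivity
    refine le_of_mul_le_mul_left ?_ ht₀
    linarith [mul_le_mul_of_nonneg_left hv ht₀.le,
      mul_le_mul_of_nonneg_left hu (by linarith : (0 : ℝ) ≤ 1 - t)]
  have hlim : Tendsto (fun t : ℝ => σ / p * (1 - t) ^ p * ‖v - u‖ ^ p) (𝓝[>] 0)
      (𝓝 (σ / p * ‖v - u‖ ^ p)) := by
    have hcont : Continuous fun t : ℝ => σ / p * (1 - t) ^ p * ‖v - u‖ ^ p := by fun_prop
    simpa using (hcont.tendsto 0).mono_left nhdsWithin_le_nhds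
  exact le_of_tendsto hlim (eventually_of_mem (Ioo_mem_nhdsGT one_pos) hstep)

theorem fenchelDual_le_add_apply_grad_add {p : ℕ} (hp : 1 < p) {σ : ℝ} (hσ : 0 < σ)
    (hsub : ∀ x, IsSubgradientAt φ (φ' x) x)
    (hφsc : ∀ x y, σ / p * ‖x - y‖ ^ p ≤ φ x - φ y - φ' y (x - y))
    (hG : ∀ z, HasFDerivAt (fenchelDual φ) (NormedSpace.inclusionInDoubleDual ℝ E (G z)) z)
    (z₁ z₂ : StrongDual ℝ E) :
    fenchelDual φ z₂ ≤ fenchelDual φ z₁ + (z₂ - z₁) (G z₁) +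
      ((p : ℝ) - 1) / p * σ ^ (-1 / ((p : ℝ) - 1)) * ‖z₂ - z₁‖ ^ ((p : ℝ) / ((p : ℝ) - 1)) := by
  have hbdd := bddAbove_range_apply_sub_of_growth hp hσ fun x => hφsc x 0
  have hsc := strongConvex_of_isSubgradientAt hσ.le hφsc
    (isSubgradientAt_grad_fenchelDual hsub hbdd hG z₁) (G z₂)
  have hdual : (z₂ - z₁) (G z₂ - G z₁) ≤ ‖z₂ - z₁‖ * ‖G z₂ - G z₁‖ :=
    (le_abs_self _).trans ((z₂ - z₁).le_opNorm _)
  have young := young_inequality_of_nonneg_scaled hp hσ (norm_nonneg (z₂ - z₁))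
    (norm_nonneg (G z₂ - G z₁))
  rw [fenchelDual_eq_apply_grad_sub hsub hbdd hG z₁,
    fenchelDual_eq_apply_grad_sub hsub hbdd hG z₂]
  simp only [sub_apply, map_sub] at hsc hdual ⊢
  linarith

end FenchelConjugate

theorem Nat.ascFactorial_eq_mul_succ_ascFactorial_sub_one (n : ℕ) {k : ℕ} (hk : k ≠ 0) :
    n.ascFactorial k = n * (n + 1).ascFactorial (k - 1) := by
  obtain ⟨k, rfl⟩ := Nat.exists_eq_succ_of_ne_zero hk
  rw [Nat.succ_sub_one, Nat.succ_ascFactorial, Nat.ascFactorial_succ]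

theorem Nat.succ_ascFactorial_eq_add_mul_ascFactorial_sub_one (n : ℕ) {k : ℕ} (hk : k ≠ 0) :
    (n + 1).ascFactorial k = (n + k) * (n + 1).ascFactorial (k - 1) := by
  obtain ⟨k, rfl⟩ := Nat.exists_eq_succ_of_ne_zero hk
  rw [Nat.succ_sub_one, Nat.ascFactorial_succ]
  congr 1
  omega

theorem Nat.succ_ascFactorial_eq_ascFactorial_add (n k : ℕ) :
    (n + 1).ascFactorial k = n.ascFactorial k + k * (n + 1).ascFactorial (k - 1) := by
  rcases Nat.eq_zero_or_pos k with rfl | hk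
  · simp
  rw [n.succ_ascFactorial_eq_add_mul_ascFactorial_sub_one hk.ne',
    n.ascFactorial_eq_mul_succ_ascFactorial_sub_one hk.ne']
  ring

theorem mirrorDescent_coeff_le_of_le_pow {p : ℕ} (hp : 1 < p) {σ s M C β K : ℝ} (hσ : 0 < σ)
    (hs : 0 ≤ s) (hM : 0 ≤ M) (hC : 0 ≤ C) (hβ : 0 ≤ β) (hK : 0 ≤ K) (hβK : β ≤ K ^ (p - 1))
    (hCub : C ≤ σ * M ^ (p - 1) / (((p : ℝ) - 1) ^ (p - 1) * p)) :
    ((p : ℝ) - 1) / p * σ ^ (-1 / ((p : ℝ) - 1)) * (C * s * p * β) ^ ((p : ℝ) / ((p : ℝ) - 1)) ≤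
      C * s * K * β * (M * s ^ (1 / ((p : ℝ) - 1))) := by
  obtain ⟨n, rfl⟩ : ∃ n, p = n + 1 := ⟨p - 1, by omega⟩
  have hn : 0 < n := by omega
  have hn' : (0 : ℝ) < n := by exact_mod_cast hn
  simp only [Nat.add_sub_cancel, Nat.cast_add, Nat.cast_one, add_sub_cancel_right] at hCub hβK ⊢
  have hpow : ∀ {x : ℝ} (r : ℝ), 0 ≤ x → (x ^ r) ^ n = x ^ (r * n) := fun r hx => by
    rw [← Real.rpow_natCast, ← Real.rpow_mul hx]
  have hcore : C * β * (n ^ n * (n + 1)) ≤ σ * (M ^ n * K ^ n) := by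
    rw [le_div_iff₀ (by positivity)] at hCub
    calc C * β * (n ^ n * (n + 1)) ≤ C * K ^ n * (n ^ n * (n + 1)) := by gcongr
      _ ≤ σ * (M ^ n * K ^ n) := by nlinarith [pow_nonneg hK n]
  refine le_of_pow_le_pow_left₀ hn.ne' (by positivity) ?_
  calc ((n : ℝ) / (n + 1) * σ ^ (-1 / (n : ℝ)) * (C * s * (n + 1) * β) ^ ((n + 1 : ℝ) / n)) ^ n
      = (C * s * β) ^ n * s * (C * β * (n ^ n * (n + 1)) / σ) := by
        rw [mul_pow, mul_pow, hpow _ hσ.le, hpow _ (by positivity)]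
        have e1 : -1 / (n : ℝ) * n = -1 := by field_simp
        have e2 : (n + 1 : ℝ) / n * n = ((n + 1 : ℕ) : ℝ) := by push_cast; field_simp
        rw [e1, e2, Real.rpow_neg_one, Real.rpow_natCast, div_pow,
          show C * s * (n + 1) * β = C * s * β * (n + 1) by ring, mul_pow (C * s * β)]
        field_simp
        ring
    _ ≤ (C * s * β) ^ n * s * (M ^ n * K ^ n) := by
        gcongr
        rwa [div_le_iff₀' hσ]
    _ = (C * s * K * β * (M * s ^ (1 / (n : ℝ)))) ^ n := by
        rw [mul_pow _ (M * _), mul_pow M, hpow _ hs, one_div_mul_cancel hn'.ne', Real.rpow_one]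
        ring

theorem mirrorDescent_coeff_le {p : ℕ} (hp : 1 < p) {σ s M C : ℝ} (hσ : 0 < σ) (hs : 0 ≤ s)
    (hM : 0 ≤ M) (hC : 0 ≤ C) (hCub : C ≤ σ * M ^ (p - 1) / (((p : ℝ) - 1) ^ (p - 1) * p))
    (k : ℕ) :
    ((p : ℝ) - 1) / p * σ ^ (-1 / ((p : ℝ) - 1)) *
        (C * s * p * (k + 1).ascFactorial (p - 1)) ^ ((p : ℝ) / ((p : ℝ) - 1)) ≤
      C * s * (k + 1).ascFactorial p * (M * s ^ (1 / ((p : ℝ) - 1))) := by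
  have hβK : ((k + 1).ascFactorial (p - 1) : ℝ) ≤ ((k : ℝ) + p) ^ (p - 1) := by
    exact_mod_cast (Nat.ascFactorial_le_pow_add k (p - 1)).trans
      (Nat.pow_le_pow_left (by omega : k + (p - 1) ≤ k + p) _)
  rw [Nat.succ_ascFactorial_eq_add_mul_ascFactorial_sub_one k (by omega : p ≠ 0)]
  push_cast
  exact (mirrorDescent_coeff_le_of_le_pow hp hσ hs hM hC (by positivity) (by positivity) hβK
    hCub).trans_eq (by ring)

theorem ascFactorial_smul_add_eq {V : Type*} [AddCommGroup V] [Module ℝ V] (c : ℝ) {p : ℕ}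
    (hp : p ≠ 0) (k : ℕ) (a b : V) :
    (c * (k + 1).ascFactorial p) • (((p : ℝ) / (k + p)) • a + ((k : ℝ) / (k + p)) • b) =
      (c * p * (k + 1).ascFactorial (p - 1)) • a + (c * k.ascFactorial p) • b := by
  have : (k : ℝ) + p ≠ 0 := by positivity
  rw [Nat.succ_ascFactorial_eq_add_mul_ascFactorial_sub_one k hp,
    Nat.ascFactorial_eq_mul_succ_ascFactorial_sub_one k hp, smul_add, smul_smul, smul_smul]
  push_cast
  congr 2 <;> field_simp

section MirrorDescent

variable {E : Type*} [NormedAddCommGroup E] [NormedSpace ℝ E] {f : E → ℝ}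
  {f' : E → StrongDual ℝ E} {ψ : StrongDual ℝ E → ℝ} {G : StrongDual ℝ E → E} {κ q m : ℝ}

theorem mirrorDescent_potential_step {A δ : ℝ} {x' y y' xs : E} {z z' : StrongDual ℝ E}
    (hf : ∀ v, IsSubgradientAt f (f' v) v)
    (hψ : ∀ z₁ z₂, ψ z₂ ≤ ψ z₁ + (z₂ - z₁) (G z₁) + κ * ‖z₂ - z₁‖ ^ q)
    (hA : 0 ≤ A) (hδ : 0 ≤ δ) (hcoef : κ * δ ^ q ≤ (A + δ) * m)
    (hx' : (A + δ) • x' = δ • G z + A • y) (hz' : z' = z - δ • f' y')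
    (hy' : m * ‖f' y'‖ ^ q ≤ f' y' (x' - y')) :
    (A + δ) * (f y' - f xs) + ψ z' - z' xs ≤ A * (f y - f xs) + ψ z - z xs := by
  subst hz'
  have hsmooth := hψ z (z - δ • f' y')
  rw [sub_sub_cancel_left, norm_neg, norm_smul, Real.norm_of_nonneg hδ,
    Real.mul_rpow hδ (norm_nonneg _)] at hsmooth
  have hx'g := congrArg (f' y') hx'
  have hfy := hf y' y
  have hfxs := hf y' xs
  simp only [map_add, map_smul, map_sub, smul_eq_mul, sub_apply, neg_apply, smul_apply]
    at hsmooth hx'g hfy hfxs hy' ⊢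
  linarith [mul_le_mul_of_nonneg_left hy' (add_nonneg hA hδ),
    mul_le_mul_of_nonneg_right hcoef (Real.rpow_nonneg (norm_nonneg (f' y')) q),
    mul_le_mul_of_nonneg_left hfy hA, mul_le_mul_of_nonneg_left hfxs hδ]

theorem mirrorDescent_potential_antitone {A δ : ℕ → ℝ} {x y : ℕ → E} {z : ℕ → StrongDual ℝ E}
    (xs : E) (hf : ∀ v, IsSubgradientAt f (f' v) v)
    (hψ : ∀ z₁ z₂, ψ z₂ ≤ ψ z₁ + (z₂ - z₁) (G z₁) + κ * ‖z₂ - z₁‖ ^ q)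
    (hA : ∀ k, 0 ≤ A k) (hδ : ∀ k, 0 ≤ δ k) (hAδ : ∀ k, A (k + 1) = A k + δ k)
    (hcoef : ∀ k, κ * δ k ^ q ≤ A (k + 1) * m)
    (hx : ∀ k, A (k + 1) • x (k + 1) = δ k • G (z k) + A k • y k)
    (hz : ∀ k, z (k + 1) = z k - δ k • f' (y (k + 1)))
    (hy : ∀ k, m * ‖f' (y (k + 1))‖ ^ q ≤ f' (y (k + 1)) (x (k + 1) - y (k + 1))) :
    Antitone fun k => A k * (f (y k) - f xs) + ψ (z k) - z k xs :=
  antitone_nat_of_succ_le fun k => by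
    simp only [hAδ] at hcoef hx ⊢
    exact mirrorDescent_potential_step hf hψ (hA k) (hδ k) (hcoef k) (hx k) (hz k) (hy k)

end MirrorDescent

theorem higher_order_mirror_descent_function_value_rate_general
{E : Type*} [NormedAddCommGroup E] [NormedSpace ℝ E]
    (p : ℕ) (hp : 2 ≤ p) (s C M σ : ℝ)
    (hs : 0 < s) (hM : 0 < M) (hσ : 0 < σ)
    -- f is a continuously differentiable convex function
    (f : E → ℝ) (f' : E → StrongDual ℝ E)
    (hfconv : ConvexOn ℝ Set.univ f)
    (hfd : ∀ x, HasFDerivAt f (f' x) x)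
    -- φ is σ-strongly convex of order p, with subgradient selection φ'
    (φ : E → ℝ) (φ' : E → StrongDual ℝ E)
    (hsub : ∀ x w, φ x + φ' x (w - x) ≤ φ w)
    (hφsc : ∀ x y, (σ / p) * ‖x - y‖ ^ p ≤ φ x - φ y - φ' y (x - y))
    -- φ* is differentiable with gradient gφs
    (gφs : StrongDual ℝ E → E)
    (hgφs : ∀ z, HasFDerivAt (fenchelDual φ) (NormedSpace.inclusionInDoubleDual ℝ E (gφs z)) z)
    -- the higher-order mirror descent iteration
    (x y : ℕ → E) (z : ℕ → StrongDual ℝ E)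
    (hx : ∀ k : ℕ, x (k + 1) =
      ((p : ℝ) / ((k : ℝ) + (p : ℝ))) • gφs (z k) + ((k : ℝ) / ((k : ℝ) + (p : ℝ))) • y k)
    (hz : ∀ k : ℕ, z (k + 1) =
      z k - (C * s * (p : ℝ) * (Nat.ascFactorial (k + 1) (p - 1) : ℝ)) • f' (y (k + 1)))
    (hy : ∀ k : ℕ, M * s ^ ((1 : ℝ) / ((p : ℝ) - 1)) * ‖f' (y k)‖ ^ ((p : ℝ) / ((p : ℝ) - 1)) ≤
      f' (y k) (x k - y k))
    (hx0 : x 0 = gφs (z 0))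
    (xs : E)
    (hC : 0 < C) (hCub : C ≤ σ * M ^ (p - 1) / (((p : ℝ) - 1) ^ (p - 1) * (p : ℝ))) :
    ∀ k : ℕ, 1 ≤ k →
      f (y k) - f xs ≤
        (φ xs - φ (x 0) - z 0 (xs - x 0)) / (C * s * (Nat.ascFactorial k p : ℝ)) := by
  have hbdd := bddAbove_range_apply_sub_of_growth hp hσ fun x => hφsc x 0
  have hpotential := mirrorDescent_potential_antitone (A := fun k => C * s * k.ascFactorial p)
    (δ := fun k => C * s * p * (k + 1).ascFactorial (p - 1)) xs
    (fun v => hfconv.isSubgradientAt_of_hasFDerivAt (hfd v))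
    (fenchelDual_le_add_apply_grad_add hp hσ hsub hφsc hgφs) (fun k => by positivity)
    (fun k => by positivity)
    (fun k => by push_cast [Nat.succ_ascFactorial_eq_ascFactorial_add k p]; ring)
    (mirrorDescent_coeff_le hp hσ hs.le hM.le hC.le hCub)
    (fun k => by rw [hx k]; exact ascFactorial_smul_add_eq _ (by omega) k _ _)
    hz (fun k => hy (k + 1))
  intro k hk
  have hFenchelYoung := le_fenchelDual hbdd (z k) xs
  have h0 := fenchelDual_eq_apply_grad_sub hsub hbdd hgφs (z 0)
  have hpos : 0 < C * s * k.ascFactorial p := by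
    obtain ⟨j, rfl⟩ : ∃ j, k = j + 1 := ⟨k - 1, by omega⟩
    have := Nat.ascFactorial_pos j p
    positivity
  have hPk := hpotential (Nat.zero_le k)
  simp only [Nat.ascFactorial_eq_mul_succ_ascFactorial_sub_one 0 (by omega : p ≠ 0), ← hx0,
    zero_mul, Nat.cast_zero, mul_zero, zero_add] at hPk h0
  rw [le_div_iff₀' hpos, map_sub]
  linarith

/-- Higher-order mirror descent with `0 < C ≤ σM^{p−1}/((p−1)^{p−1}p)` satisfies
`f(y_k) − f(x*) ≤ D_φ(x*, x₀)/(Cs·k^{(p)})` for every `k ≥ 1`, where `k^{(p)}` is the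
rising factorial and `D_φ(x*, x₀) = φ(x*) − φ(x₀) − ⟨z₀, x* − x₀⟩`. -/
theorem higher_order_mirror_descent_function_value_rate
{E : Type*} [NormedAddCommGroup E] [NormedSpace ℝ E] [FiniteDimensional ℝ E]
    (p : ℕ) (hp : 2 ≤ p) (s C M σ : ℝ)
    (hs : 0 < s) (hM : 0 < M) (hσ : 0 < σ)
    -- f is a continuously differentiable convex function
    (f : E → ℝ) (f' : E → StrongDual ℝ E)
    (hfconv : ConvexOn ℝ Set.univ f)
    (hfd : ∀ x, HasFDerivAt f (f' x) x) (hfc : Continuous f')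
    -- φ is σ-strongly convex of order p, with subgradient selection φ'
    (φ : E → ℝ) (φ' : E → StrongDual ℝ E)
    (hφconv : ConvexOn ℝ Set.univ φ)
    (hsub : ∀ x w, φ x + φ' x (w - x) ≤ φ w)
    (hφsc : ∀ x y, (σ / p) * ‖x - y‖ ^ p ≤ φ x - φ y - φ' y (x - y))
    -- φ* is differentiable with gradient gφs
    (gφs : StrongDual ℝ E → E)
    (hgφs : ∀ z, HasFDerivAt (fenchelDual φ) (NormedSpace.inclusionInDoubleDual ℝ E (gφs z)) z)
    -- the higher-order mirror descent iteration
    (x y : ℕ → E) (z : ℕ → StrongDual ℝ E)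
    (hx : ∀ k : ℕ, x (k + 1) =
      ((p : ℝ) / ((k : ℝ) + (p : ℝ))) • gφs (z k) + ((k : ℝ) / ((k : ℝ) + (p : ℝ))) • y k)
    (hz : ∀ k : ℕ, z (k + 1) =
      z k - (C * s * (p : ℝ) * (Nat.ascFactorial (k + 1) (p - 1) : ℝ)) • f' (y (k + 1)))
    (hy : ∀ k : ℕ, M * s ^ ((1 : ℝ) / ((p : ℝ) - 1)) * ‖f' (y k)‖ ^ ((p : ℝ) / ((p : ℝ) - 1)) ≤
      f' (y k) (x k - y k))
    (hx0 : x 0 = gφs (z 0))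
    -- x* is a global minimizer of f and ∇φ*(z*) = x*
    (xs : E) (zs : StrongDual ℝ E)
    (hxs : ∀ w, f xs ≤ f w) (hzs : gφs zs = xs)
    (hC : 0 < C) (hCub : C ≤ σ * M ^ (p - 1) / (((p : ℝ) - 1) ^ (p - 1) * (p : ℝ))) :
    ∀ k : ℕ, 1 ≤ k →
      f (y k) - f xs ≤
        (φ xs - φ (x 0) - z 0 (xs - x 0)) / (C * s * (Nat.ascFactorial k p : ℝ)) :=
  higher_order_mirror_descent_function_value_rate_general p hp s C M σ hs hM hσ f f' hfconv hfd φ φ'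
    hsub hφsc gφs hgφs x y z hx hz hy hx0 xs hC hCub
end

section
/- Let p ≥ 2 be an integer, s > 0, C > 0, M > 0, and let {x_k}, {y_k}, {z_k} be sequences generated by the higher-order mirror descent x_{k+1} = (p/(k+p)) ∇φ*(z_k) + (k/(k+p)) y_k, z_{k+1} = z_k − C s p (k+1)^{(p−1)} ∇f(y_{k+1}), where each y_k satisfies ⟨∇f(y_k), x_k − y_k⟩ ≥ M s^{1/(p−1)} ‖∇f(y_k)‖_*^{p/(p−1)}, with x₀ = ∇φ*(z₀). If 0 < C < σ M^{p−1} / ((p−1)^{p−1} p), then min_{0 ≤ i ≤ k} ‖∇f(y_i)‖_*^{p/(p−1)} = o(1/k^{p+1}) as k → ∞; that is, k^{p+1} · min_{0 ≤ i ≤ k} ‖∇f(y_i)‖_*^{p/(p−1)} → 0. -/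
open Set Filter Topology

/-!
With `A_k = C s k^{(p)}`, the energy `A_k (f(y_k) - f(x⋆)) + φ*(z_k) - ⟨z_k, x⋆⟩` is bounded below
and drops at each step by at least `c (k+1)^{(p)} ‖∇f(y_{k+1})‖_*^{p/(p-1)}` with `c > 0`. Convexity
of `f` controls the function values; order-`p` uniform convexity of `φ` makes `φ*` smooth of order
`p/(p-1)` (a weighted Young inequality), and the resulting error is absorbed by the condition on
`y_{k+1}` precisely when `C < σ M^{p-1} / ((p-1)^{p-1} p)`. Hence `∑ k^p ‖∇f(y_k)‖_*^{p/(p-1)}`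
converges, and comparing the minimum with the block of indices in `(k/2, k]` gives
`k^{p+1} min_{i ≤ k} ‖∇f(y_i)‖_*^{p/(p-1)} ≤ 2^{p+1} ∑_{k/2 < i ≤ k} i^p ‖∇f(y_i)‖_*^{p/(p-1)} → 0`.
-/

theorem ConvexOn.add_le_of_hasFDerivAt {V : Type*} [NormedAddCommGroup V] [NormedSpace ℝ V]
    {F : V → ℝ} {G : StrongDual ℝ V} {u v : V} (hF : ConvexOn ℝ univ F) (hG : HasFDerivAt F G v) :
    F v + G (u - v) ≤ F u := by
  have hline : ConvexOn ℝ univ (F ∘ AffineMap.lineMap (k := ℝ) v u) :=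
    hF.comp_affineMap (AffineMap.lineMap v u)
  have hderiv : HasDerivAt (F ∘ AffineMap.lineMap (k := ℝ) v u) (G (u - v)) 0 := by
    have hG0 : HasFDerivAt F G (AffineMap.lineMap v u (0 : ℝ)) := by simpa using hG
    exact hG0.comp_hasDerivAt 0 AffineMap.hasDerivAt_lineMap
  have := hline.le_slope_of_hasDerivAt (mem_univ 0) (mem_univ 1) one_pos hderiv
  simpa [slope_def_field, map_sub, add_comm, le_sub_iff_add_le] using this

theorem young_inequality_weighted {r σ a b : ℝ} (hr : 1 < r) (hσ : 0 < σ) (ha : 0 ≤ a)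
    (hb : 0 ≤ b) :
    a * b ≤ σ / r * b ^ r + (r - 1) / r * σ ^ (-1 / (r - 1)) * a ^ (r / (r - 1)) := by
  have hr0 : 0 < r := one_pos.trans hr
  have hconj : r.HolderConjugate (r / (r - 1)) :=
    (Real.holderConjugate_iff_eq_conjExponent hr).2 rfl
  set t : ℝ := σ ^ (1 / r)
  have ht : 0 < t := Real.rpow_pos_of_pos hσ _
  have htr : t ^ r = σ := by
    rw [← Real.rpow_mul hσ.le, one_div_mul_cancel hr0.ne', Real.rpow_one]
  have htinv : t⁻¹ ^ (r / (r - 1)) = σ ^ (-1 / (r - 1)) := by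
    rw [← Real.rpow_neg_one t, ← Real.rpow_mul hσ.le, ← Real.rpow_mul hσ.le]
    congr 1
    field_simp
  have key := Real.young_inequality_of_nonneg (mul_nonneg ht.le hb)
    (mul_nonneg ha (inv_nonneg.2 ht.le)) hconj
  rw [Real.mul_rpow ht.le hb, htr, Real.mul_rpow ha (inv_nonneg.2 ht.le), htinv,
    show t * b * (a * t⁻¹) = a * b by field_simp] at key
  calc a * b ≤ σ * b ^ r / r + a ^ (r / (r - 1)) * σ ^ (-1 / (r - 1)) / (r / (r - 1)) := key
    _ = _ := by field_simp

def UniformlyConvexOfOrder {E : Type*} [NormedAddCommGroup E] [NormedSpace ℝ E]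
    (σ : ℝ) (p : ℕ) (φ : E → ℝ) (φ' : E → StrongDual ℝ E) : Prop :=
  ∀ x y, σ / p * ‖x - y‖ ^ p ≤ φ x - φ y - φ' y (x - y)

section UniformlyConvex

variable {E : Type*} [NormedAddCommGroup E] [NormedSpace ℝ E] {σ : ℝ} {p : ℕ} {φ : E → ℝ}
  {φ' : E → StrongDual ℝ E}

theorem UniformlyConvexOfOrder.add_le_of_subgradient (h : UniformlyConvexOfOrder σ p φ φ')
    (hσ : 0 ≤ σ) {g : StrongDual ℝ E} {y : E} (hg : ∀ w, φ y + g (w - y) ≤ φ w) (x : E) :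
    φ y + g (x - y) + σ / p * ‖x - y‖ ^ p ≤ φ x := by
  set N := σ / p * ‖x - y‖ ^ p
  have hN : 0 ≤ N := by positivity
  -- compare `φ x` and `φ y` with `φ` at the intermediate point `y + t (x - y)`, then let `t → 0`
  have key : ∀ t ∈ Ioo (0 : ℝ) 1, (1 - t) ^ p * N ≤ φ x - φ y - g (x - y) := by
    rintro t ⟨ht0, ht1⟩
    set b := y + t • (x - y)
    have hxb := h x b
    have hyb := h y b
    have hgb := hg b
    rw [show x - b = (1 - t) • (x - y) by module, norm_smul, Real.norm_of_nonneg (by linarith),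
      mul_pow, map_smul, smul_eq_mul] at hxb
    rw [show y - b = (-t) • (x - y) by module, map_smul, smul_eq_mul] at hyb
    rw [show b - y = t • (x - y) by module, map_smul, smul_eq_mul] at hgb
    have hyb' : 0 ≤ φ y - φ b + t * φ' b (x - y) := by
      have : 0 ≤ σ / p * ‖-t • (x - y)‖ ^ p := by positivity
      linarith
    have : t * ((1 - t) ^ p * N) ≤ t * (φ x - φ y - g (x - y)) := by
      have := mul_le_mul_of_nonneg_left hxb ht0.le
      nlinarith [mul_nonneg (sub_nonneg.2 ht1.le) hyb']
    exact le_of_mul_le_mul_left this ht0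
  have hlim : Tendsto (fun t : ℝ => (1 - t) ^ p * N) (𝓝[>] 0) (𝓝 N) := by
    have : Tendsto (fun t : ℝ => (1 - t) ^ p * N) (𝓝 0) (𝓝 ((1 - 0) ^ p * N)) :=
      ((continuous_const.sub continuous_id).pow p |>.mul continuous_const).tendsto 0
    simpa using this.mono_left nhdsWithin_le_nhds
  have := le_of_tendsto hlim <| by
    filter_upwards [Ioo_mem_nhdsGT one_pos] with t ht using key t ht
  linarith

theorem UniformlyConvexOfOrder.bddAbove_range_sub (h : UniformlyConvexOfOrder σ p φ φ')
    (hp : 2 ≤ p) (hσ : 0 < σ) (z : StrongDual ℝ E) : BddAbove (range fun x => z x - φ x) := by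
  set c := σ / p
  set K := ‖z‖ + ‖φ' 0‖
  have hc : 0 < c := by positivity
  refine ⟨-φ 0 + K ^ 2 / (4 * c) + c, ?_⟩
  rintro _ ⟨x, rfl⟩
  have hx := h x 0
  rw [sub_zero] at hx
  have hlin : z x - φ' 0 x ≤ K * ‖x‖ := by
    have h1 := (le_abs_self _).trans (z.le_opNorm x)
    have h2 := (neg_le_abs _).trans ((φ' 0).le_opNorm x)
    linarith
  have hsq : ‖x‖ ^ 2 ≤ ‖x‖ ^ p + 1 := by
    rcases le_total ‖x‖ 1 with h1 | h1
    · nlinarith [pow_le_one₀ (norm_nonneg x) h1 (n := 2), pow_nonneg (norm_nonneg x) p]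
    · linarith [pow_le_pow_right₀ h1 hp]
  have hquad : K * ‖x‖ - c * ‖x‖ ^ 2 ≤ K ^ 2 / (4 * c) := by
    rw [le_div_iff₀ (by positivity)]
    nlinarith [sq_nonneg (2 * c * ‖x‖ - K)]
  nlinarith

theorem UniformlyConvexOfOrder.sub_le_fenchelDual (h : UniformlyConvexOfOrder σ p φ φ')
    (hp : 2 ≤ p) (hσ : 0 < σ) (z : StrongDual ℝ E) (x : E) : z x - φ x ≤ fenchelDual φ z :=
  le_ciSup (h.bddAbove_range_sub hp hσ z) x

theorem UniformlyConvexOfOrder.convexOn_fenchelDual (h : UniformlyConvexOfOrder σ p φ φ')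
    (hp : 2 ≤ p) (hσ : 0 < σ) : ConvexOn ℝ univ (fenchelDual φ) := by
  refine ⟨convex_univ, fun u _ v _ a b ha hb hab => ciSup_le fun x => ?_⟩
  have hu := mul_le_mul_of_nonneg_left (h.sub_le_fenchelDual hp hσ u x) ha
  have hv := mul_le_mul_of_nonneg_left (h.sub_le_fenchelDual hp hσ v x) hb
  simp only [add_apply, smul_apply, smul_eq_mul]
  linear_combination hu + hv + φ x * hab

theorem UniformlyConvexOfOrder.subgradient_of_hasFDerivAt_fenchelDual
    (h : UniformlyConvexOfOrder σ p φ φ') (hp : 2 ≤ p) (hσ : 0 < σ)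
    (hsub : ∀ x w, φ x + φ' x (w - x) ≤ φ w) {u : StrongDual ℝ E} {x : E}
    (hx : HasFDerivAt (fenchelDual φ) (NormedSpace.inclusionInDoubleDual ℝ E x) u) (w : E) :
    φ x + u (w - x) ≤ φ w := by
  -- Fenchel–Young equality `φ* u + φ x = u x`: test the gradient inequality of `φ*` at `u`
  -- against `φ' x`, for which `φ* (φ' x) ≤ φ' x x - φ x`
  have hgrad := (h.convexOn_fenchelDual hp hσ).add_le_of_hasFDerivAt (u := φ' x) hx
  have hφ'x : fenchelDual φ (φ' x) ≤ φ' x x - φ x := ciSup_le fun v => by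
    linarith [hsub x v, map_sub (φ' x) v x]
  have hw := h.sub_le_fenchelDual hp hσ u w
  simp only [NormedSpace.dual_def, sub_apply] at hgrad
  linarith [map_sub u w x]

theorem UniformlyConvexOfOrder.fenchelDual_le_add_norm_rpow (h : UniformlyConvexOfOrder σ p φ φ')
    (hp : 2 ≤ p) (hσ : 0 < σ) (hsub : ∀ x w, φ x + φ' x (w - x) ≤ φ w) {v : StrongDual ℝ E}
    {x : E} (hx : HasFDerivAt (fenchelDual φ) (NormedSpace.inclusionInDoubleDual ℝ E x) v)
    (u : StrongDual ℝ E) :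
    fenchelDual φ u ≤ fenchelDual φ v + (u - v) x
      + (p - 1) / p * σ ^ (-1 / ((p : ℝ) - 1)) * ‖u - v‖ ^ ((p : ℝ) / (p - 1)) := by
  have hp1 : (1 : ℝ) < p := by exact_mod_cast hp
  refine ciSup_le fun w => ?_
  have hstrong := h.add_le_of_subgradient hσ.le
    (h.subgradient_of_hasFDerivAt_fenchelDual hp hσ hsub hx) w
  have hv := h.sub_le_fenchelDual hp hσ v x
  have hdual := (le_abs_self _).trans ((u - v).le_opNorm (w - x))
  have hyoung := young_inequality_weighted hp1 hσ (norm_nonneg (u - v)) (norm_nonneg (w - x))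
  rw [Real.rpow_natCast] at hyoung
  simp only [map_sub, sub_apply] at hstrong hdual ⊢
  linarith

end UniformlyConvex

theorem ascFactorial_pred_rpow_le (n p : ℕ) (hp : 2 ≤ p) :
    ((n + 1).ascFactorial (p - 1) : ℝ) ^ ((p : ℝ) / (p - 1)) ≤ (n + 1).ascFactorial p := by
  obtain ⟨m, rfl⟩ : ∃ m, p = m + 1 := ⟨p - 1, by omega⟩
  have hm : (0 : ℝ) < m := by exact_mod_cast (show 0 < m by omega)
  have hX : (0 : ℝ) < (n + 1).ascFactorial m := by exact_mod_cast Nat.ascFactorial_pos n m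
  have hroot : ((n + 1).ascFactorial m : ℝ) ^ (1 / (m : ℝ)) ≤ n + m := by
    have hle : ((n + 1).ascFactorial m : ℝ) ≤ ((n + m : ℕ) : ℝ) ^ m := by
      exact_mod_cast Nat.ascFactorial_le_pow_add n m
    calc ((n + 1).ascFactorial m : ℝ) ^ (1 / (m : ℝ))
        ≤ (((n + m : ℕ) : ℝ) ^ m) ^ (1 / (m : ℝ)) := by gcongr
      _ = n + m := by
        rw [← Real.rpow_natCast, ← Real.rpow_mul (by positivity), mul_one_div_cancel hm.ne',
          Real.rpow_one]
        push_cast; ring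
  have hexp : ((m + 1 : ℕ) : ℝ) / ((m + 1 : ℕ) - 1) = 1 + 1 / m := by
    push_cast; rw [add_sub_cancel_right]; field_simp
  rw [Nat.add_sub_cancel, hexp, Real.rpow_add hX, Real.rpow_one, Nat.ascFactorial_succ]
  push_cast
  nlinarith

theorem young_constant_lt {p : ℕ} {s C M σ : ℝ} (hp : 2 ≤ p) (hs : 0 < s) (hM : 0 < M)
    (hσ : 0 < σ) (hC : 0 < C) (hCub : C < σ * M ^ (p - 1) / ((p - 1) ^ (p - 1) * p)) :
    (p - 1) / p * σ ^ (-1 / ((p : ℝ) - 1)) * (C * s * p) ^ ((p : ℝ) / (p - 1))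
      < M * s ^ (1 / ((p : ℝ) - 1)) * (C * s) := by
  obtain ⟨m, rfl⟩ : ∃ m, p = m + 1 := ⟨p - 1, by omega⟩
  have hm : (0 : ℝ) < m := by exact_mod_cast (show 0 < m by omega)
  have hm0 : m ≠ 0 := by omega
  push_cast at hCub ⊢
  simp only [add_sub_cancel_right] at hCub ⊢
  have hpow : ∀ {x : ℝ} (a : ℝ), 0 ≤ x → (x ^ (a / m)) ^ m = x ^ a := fun a hx => by
    rw [← Real.rpow_natCast, ← Real.rpow_mul hx, div_mul_cancel₀ a hm.ne']
  rw [← pow_lt_pow_iff_left₀ (by positivity) (by positivity) hm0, mul_pow, mul_pow, mul_pow,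
    hpow _ hσ.le, hpow _ (by positivity), Real.rpow_neg_one, ← Nat.cast_add_one,
    Real.rpow_natCast]
  rw [lt_div_iff₀ (by positivity)] at hCub
  have hCs : 0 < C ^ m * s ^ (m + 1) * (m + 1) ^ m := by positivity
  calc _ = C * (m ^ m * (m + 1)) / σ * (C ^ m * s ^ (m + 1) * (m + 1) ^ m) / (m + 1) ^ m := by
        push_cast; simp only [div_pow, mul_pow]; field_simp; ring
    _ < M ^ m * (C ^ m * s ^ (m + 1) * (m + 1) ^ m) / (m + 1) ^ m := by
        gcongr
        rw [div_lt_iff₀ hσ]; linarith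
    _ = (M * s ^ (1 / (m : ℝ))) ^ m * (C * s) ^ m := by
        rw [mul_pow, hpow _ hs.le, Real.rpow_one]; field_simp; ring

section Energy

variable {E : Type*} [NormedAddCommGroup E] [NormedSpace ℝ E]

-- For `F = φ*` and `∇φ*(z⋆) = x⋆`, the last term is the Bregman divergence `D_{φ*}(z, z⋆)` up to
-- an additive constant.
def lyapunovEnergy (f : E → ℝ) (F : StrongDual ℝ E → ℝ) (xs : E) (A : ℝ) (y : E)
    (z : StrongDual ℝ E) : ℝ :=
  A * (f y - f xs) + (F z - z xs)

theorem lyapunovEnergy_step_le {f : E → ℝ} {f' : E → StrongDual ℝ E} {F : StrongDual ℝ E → ℝ}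
    (hf : ∀ u v, f v + f' v (u - v) ≤ f u) {A a e m : ℝ} (hA : 0 ≤ A) (ha : 0 ≤ a)
    {w x' y y' xs : E} {z z' : StrongDual ℝ E} (hx' : (A + a) • x' = a • w + A • y)
    (hz' : z' = z - a • f' y') (hF : F z' ≤ F z + (z' - z) w + e) (hy' : m ≤ f' y' (x' - y')) :
    lyapunovEnergy f F xs (A + a) y' z' + (A + a) * m ≤ lyapunovEnergy f F xs A y z + e := by
  have hy := mul_le_mul_of_nonneg_left (hf y y') hA
  have hxs := mul_le_mul_of_nonneg_left (hf xs y') ha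
  have hm := mul_le_mul_of_nonneg_left hy' (add_nonneg hA ha)
  have hx := congrArg (f' y') hx'
  subst hz'
  unfold lyapunovEnergy
  simp only [map_add, map_sub, map_smul, smul_eq_mul, sub_sub_cancel_left, neg_apply,
    sub_apply, smul_apply] at hx hF hy hxs hm ⊢
  linarith

theorem higherOrderMirrorDescent_energy_step {p : ℕ} {s C M K : ℝ} {f : E → ℝ}
    {f' : E → StrongDual ℝ E} {F : StrongDual ℝ E → ℝ} {gF : StrongDual ℝ E → E}
    (hp : 2 ≤ p) (hs : 0 < s) (hC : 0 < C) (hK : 0 ≤ K) (hf : ∀ u v, f v + f' v (u - v) ≤ f u)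
    (hF : ∀ u v, F u ≤ F v + (u - v) (gF v) + K * ‖u - v‖ ^ ((p : ℝ) / (p - 1)))
    (k : ℕ) {x' y y' xs : E} {z z' : StrongDual ℝ E}
    (hx : x' = ((p : ℝ) / (k + p)) • gF z + ((k : ℝ) / (k + p)) • y)
    (hz : z' = z - (C * s * p * (k + 1).ascFactorial (p - 1)) • f' y')
    (hy : M * s ^ (1 / ((p : ℝ) - 1)) * ‖f' y'‖ ^ ((p : ℝ) / (p - 1)) ≤ f' y' (x' - y')) :
    lyapunovEnergy f F xs (C * s * (k + 1).ascFactorial p) y' z'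
        + (M * s ^ (1 / ((p : ℝ) - 1)) * (C * s) - K * (C * s * p) ^ ((p : ℝ) / (p - 1)))
          * ((k + 1).ascFactorial p * ‖f' y'‖ ^ ((p : ℝ) / (p - 1)))
      ≤ lyapunovEnergy f F xs (C * s * k.ascFactorial p) y z := by
  obtain ⟨hsucc, hpred⟩ : ((k + 1).ascFactorial p : ℝ) = (k + p) * (k + 1).ascFactorial (p - 1) ∧
      (k.ascFactorial p : ℝ) = k * (k + 1).ascFactorial (p - 1) := by
    obtain ⟨m, rfl⟩ : ∃ m, p = m + 1 := ⟨p - 1, by omega⟩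
    have hpred : k.ascFactorial (m + 1) = k * (k + 1).ascFactorial m := by
      rw [Nat.succ_ascFactorial, Nat.ascFactorial_succ]
    rw [Nat.add_sub_cancel, Nat.ascFactorial_succ, hpred]
    push_cast; constructor <;> ring
  have hB : (0 : ℝ) < (k + 1).ascFactorial (p - 1) := by exact_mod_cast Nat.ascFactorial_pos ..
  have hkp : (0 : ℝ) < k + p := by positivity
  set q : ℝ := p / (p - 1)
  set B : ℝ := ((k + 1).ascFactorial (p - 1) : ℝ)
  set a := C * s * p * B with ha
  have hweights : C * s * k.ascFactorial p + a = C * s * (k + 1).ascFactorial p := by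
    rw [hsucc, hpred]; ring
  have hx' : (C * s * k.ascFactorial p + a) • x' = a • gF z + (C * s * k.ascFactorial p) • y := by
    rw [hweights, hx, smul_add, smul_smul, smul_smul, hsucc, hpred, ha]
    congr 2 <;> field_simp
  have hFz : F z' ≤ F z + (z' - z) (gF z) + K * a ^ q * ‖f' y'‖ ^ q := by
    have hdiff : ‖z' - z‖ ^ q = a ^ q * ‖f' y'‖ ^ q := by
      rw [hz, sub_sub_cancel_left, norm_neg, norm_smul, Real.norm_of_nonneg (by positivity),
        Real.mul_rpow (by positivity) (norm_nonneg _)]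
    simpa only [hdiff, mul_assoc] using hF z' z
  have haq : K * a ^ q ≤ K * (C * s * p) ^ q * (k + 1).ascFactorial p := by
    rw [Real.mul_rpow (by positivity) hB.le, ← mul_assoc]
    exact mul_le_mul_of_nonneg_left (ascFactorial_pred_rpow_le k p hp) (by positivity)
  have hstep := lyapunovEnergy_step_le (xs := xs) hf (by positivity) (by positivity) hx' hz hFz hy
  rw [hweights] at hstep
  linear_combination hstep + mul_le_mul_of_nonneg_right haq (by positivity : 0 ≤ ‖f' y'‖ ^ q)

end Energy

theorem summable_of_add_le_of_forall_le {V w : ℕ → ℝ} {b : ℝ} (hV : ∀ n, b ≤ V n)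
    (hw : ∀ n, 0 ≤ w n) (h : ∀ n, V (n + 1) + w n ≤ V n) : Summable w := by
  refine summable_of_sum_range_le hw (c := V 0 - b) fun n => ?_
  have htelescope : ∑ i ∈ Finset.range n, w i ≤ V 0 - V n := by
    induction n with
    | zero => simp
    | succ n ih => rw [Finset.sum_range_succ]; linarith [h n]
  linarith [hV n]

theorem tendsto_pow_succ_mul_sInf_of_summable (p : ℕ) {g : ℕ → ℝ} (hg : ∀ i, 0 ≤ g i)
    (h : Summable fun i : ℕ => (i : ℝ) ^ p * g i) :
    Tendsto (fun k : ℕ => (k : ℝ) ^ (p + 1) * sInf (g '' {i | i ≤ k})) atTop (𝓝 0) := by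
  set u : ℕ → ℝ := fun i : ℕ => (i : ℝ) ^ p * g i
  -- the sums of `u` over the blocks `(k/2, k]` tend to `0`, and each dominates `(k/2)^{p+1} min g`
  have hblock : Tendsto (fun k => ∑ i ∈ Finset.Ico (k / 2 + 1) (k + 1), u i) atTop (𝓝 0) := by
    have hS := h.hasSum.tendsto_sum_nat
    have hhalf : Tendsto (fun k : ℕ => k / 2 + 1) atTop atTop :=
      tendsto_atTop_atTop.2 fun b => ⟨2 * b, fun k hk => by omega⟩
    have := (hS.comp (tendsto_add_atTop_nat 1)).sub (hS.comp hhalf)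
    rw [sub_self] at this
    refine this.congr fun k => ?_
    simp only [Function.comp_apply, Finset.sum_Ico_eq_sub _ (by omega : k / 2 + 1 ≤ k + 1)]
  refine squeeze_zero (fun k => ?_) (fun k => ?_) (by simpa using hblock.const_mul (2 ^ (p + 1)))
  · exact mul_nonneg (by positivity) (Real.sInf_nonneg (by rintro _ ⟨i, -, rfl⟩; exact hg i))
  set m := sInf (g '' {i | i ≤ k})
  have hm0 : 0 ≤ m := Real.sInf_nonneg (by rintro _ ⟨i, -, rfl⟩; exact hg i)
  have hterm : ∀ i ∈ Finset.Ico (k / 2 + 1) (k + 1), ((k : ℝ) / 2) ^ p * m ≤ u i := by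
    intro i hi
    rw [Finset.mem_Ico] at hi
    have hki : (k : ℝ) / 2 ≤ i := by
      rw [div_le_iff₀ two_pos]; exact_mod_cast (by omega : k ≤ i * 2)
    have hmi : m ≤ g i := csInf_le ⟨0, by rintro _ ⟨j, -, rfl⟩; exact hg j⟩ ⟨i, by simp; omega, rfl⟩
    exact mul_le_mul (pow_le_pow_left₀ (by positivity) hki p) hmi hm0 (by positivity)
  have hcard : (k : ℝ) / 2 ≤ (Finset.Ico (k / 2 + 1) (k + 1)).card := by
    rw [Nat.card_Ico, div_le_iff₀ two_pos]
    exact_mod_cast (by omega : k ≤ (k + 1 - (k / 2 + 1)) * 2)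
  calc (k : ℝ) ^ (p + 1) * m = 2 ^ (p + 1) * ((k / 2) * ((k / 2) ^ p * m)) := by
        rw [div_pow]; field_simp; ring
    _ ≤ 2 ^ (p + 1) * ((Finset.Ico (k / 2 + 1) (k + 1)).card * ((k / 2) ^ p * m)) := by
        gcongr
    _ ≤ 2 ^ (p + 1) * ∑ i ∈ Finset.Ico (k / 2 + 1) (k + 1), u i := by
        gcongr
        simpa [nsmul_eq_mul] using Finset.card_nsmul_le_sum _ _ _ hterm

theorem higher_order_mirror_descent_gradient_rate_general
{E : Type*} [NormedAddCommGroup E] [NormedSpace ℝ E]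
    (p : ℕ) (hp : 2 ≤ p) (s C M σ : ℝ)
    (hs : 0 < s) (hM : 0 < M) (hσ : 0 < σ)
    -- f is a continuously differentiable convex function
    (f : E → ℝ) (f' : E → StrongDual ℝ E)
    (hfconv : ConvexOn ℝ Set.univ f)
    (hfd : ∀ x, HasFDerivAt f (f' x) x)
    -- φ is σ-strongly convex of order p, with subgradient selection φ'
    (φ : E → ℝ) (φ' : E → StrongDual ℝ E)
    (hsub : ∀ x w, φ x + φ' x (w - x) ≤ φ w)
    (hφsc : ∀ x y, (σ / p) * ‖x - y‖ ^ p ≤ φ x - φ y - φ' y (x - y))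
    -- φ* is differentiable with gradient gφs
    (gφs : StrongDual ℝ E → E)
    (hgφs : ∀ z, HasFDerivAt (fenchelDual φ) (NormedSpace.inclusionInDoubleDual ℝ E (gφs z)) z)
    -- the higher-order mirror descent iteration
    (x y : ℕ → E) (z : ℕ → StrongDual ℝ E)
    (hx : ∀ k : ℕ, x (k + 1) =
      ((p : ℝ) / ((k : ℝ) + (p : ℝ))) • gφs (z k) + ((k : ℝ) / ((k : ℝ) + (p : ℝ))) • y k)
    (hz : ∀ k : ℕ, z (k + 1) =
      z k - (C * s * (p : ℝ) * (Nat.ascFactorial (k + 1) (p - 1) : ℝ)) • f' (y (k + 1)))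
    (hy : ∀ k : ℕ, M * s ^ ((1 : ℝ) / ((p : ℝ) - 1)) * ‖f' (y k)‖ ^ ((p : ℝ) / ((p : ℝ) - 1)) ≤
      f' (y k) (x k - y k))
    -- x* is a global minimizer of f and ∇φ*(z*) = x*
    (xs : E) (zs : StrongDual ℝ E)
    (hxs : ∀ w, f xs ≤ f w) (hzs : gφs zs = xs)
    (hC : 0 < C) (hCub : C < σ * M ^ (p - 1) / (((p : ℝ) - 1) ^ (p - 1) * (p : ℝ))) :
    Tendsto
      (fun k : ℕ => (k : ℝ) ^ (p + 1) *
        sInf ((fun i => ‖f' (y i)‖ ^ ((p : ℝ) / ((p : ℝ) - 1))) '' {i : ℕ | i ≤ k}))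
      atTop (𝓝 0) := by
  set q : ℝ := p / (p - 1)
  set K : ℝ := (p - 1) / p * σ ^ (-1 / ((p : ℝ) - 1))
  set c := M * s ^ (1 / ((p : ℝ) - 1)) * (C * s) - K * (C * s * p) ^ q
  have hp1 : (1 : ℝ) ≤ p := by exact_mod_cast (by omega : 1 ≤ p)
  have hK : 0 ≤ K :=
    mul_nonneg (div_nonneg (sub_nonneg.2 hp1) p.cast_nonneg) (Real.rpow_nonneg hσ.le _)
  have hc : 0 < c := sub_pos.2 (young_constant_lt hp hs hM hσ hC hCub)
  have hφ : UniformlyConvexOfOrder σ p φ φ' := hφsc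
  have hf : ∀ u v, f v + f' v (u - v) ≤ f u := fun u v => hfconv.add_le_of_hasFDerivAt (hfd v)
  have hF : ∀ u v, fenchelDual φ u ≤ fenchelDual φ v + (u - v) (gφs v) + K * ‖u - v‖ ^ q :=
    fun u v => hφ.fenchelDual_le_add_norm_rpow hp hσ hsub (hgφs v) u
  set V : ℕ → ℝ := fun k =>
    lyapunovEnergy f (fenchelDual φ) xs (C * s * k.ascFactorial p) (y k) (z k)
  have hV : ∀ k, fenchelDual φ zs - zs xs ≤ V k := fun k => by
    have hgap : 0 ≤ C * s * k.ascFactorial p * (f (y k) - f xs) :=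
      mul_nonneg (by positivity) (sub_nonneg.2 (hxs (y k)))
    have hFz := (hφ.convexOn_fenchelDual hp hσ).add_le_of_hasFDerivAt (u := z k) (hgφs zs)
    simp only [NormedSpace.dual_def, hzs, sub_apply] at hFz
    simp only [V, lyapunovEnergy]
    linarith
  have hsum := summable_of_add_le_of_forall_le hV (fun k => by positivity) fun k =>
    higherOrderMirrorDescent_energy_step hp hs hC hK hf hF k (hx k) (hz k) (hy (k + 1))
  refine tendsto_pow_succ_mul_sInf_of_summable p (fun i => by positivity) ?_
  refine (summable_nat_add_iff 1).1 ((hsum.mul_left c⁻¹).of_nonneg_of_le (fun k => by positivity)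
    fun k => ?_)
  rw [inv_mul_cancel_left₀ hc.ne']
  gcongr
  exact_mod_cast Nat.pow_succ_le_ascFactorial (k + 1) p

/-- Higher-order mirror descent with `0 < C < σM^{p−1}/((p−1)^{p−1}p)` satisfies
`min_{0 ≤ i ≤ k} ‖∇f(y_i)‖_*^{p/(p−1)} = o(1/k^{p+1})` as `k → ∞`. -/
theorem higher_order_mirror_descent_gradient_rate
{E : Type*} [NormedAddCommGroup E] [NormedSpace ℝ E] [FiniteDimensional ℝ E]
    (p : ℕ) (hp : 2 ≤ p) (s C M σ : ℝ)
    (hs : 0 < s) (hM : 0 < M) (hσ : 0 < σ)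
    -- f is a continuously differentiable convex function
    (f : E → ℝ) (f' : E → StrongDual ℝ E)
    (hfconv : ConvexOn ℝ Set.univ f)
    (hfd : ∀ x, HasFDerivAt f (f' x) x) (hfc : Continuous f')
    -- φ is σ-strongly convex of order p, with subgradient selection φ'
    (φ : E → ℝ) (φ' : E → StrongDual ℝ E)
    (hφconv : ConvexOn ℝ Set.univ φ)
    (hsub : ∀ x w, φ x + φ' x (w - x) ≤ φ w)
    (hφsc : ∀ x y, (σ / p) * ‖x - y‖ ^ p ≤ φ x - φ y - φ' y (x - y))
    -- φ* is differentiable with gradient gφs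
    (gφs : StrongDual ℝ E → E)
    (hgφs : ∀ z, HasFDerivAt (fenchelDual φ) (NormedSpace.inclusionInDoubleDual ℝ E (gφs z)) z)
    -- the higher-order mirror descent iteration
    (x y : ℕ → E) (z : ℕ → StrongDual ℝ E)
    (hx : ∀ k : ℕ, x (k + 1) =
      ((p : ℝ) / ((k : ℝ) + (p : ℝ))) • gφs (z k) + ((k : ℝ) / ((k : ℝ) + (p : ℝ))) • y k)
    (hz : ∀ k : ℕ, z (k + 1) =
      z k - (C * s * (p : ℝ) * (Nat.ascFactorial (k + 1) (p - 1) : ℝ)) • f' (y (k + 1)))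
    (hy : ∀ k : ℕ, M * s ^ ((1 : ℝ) / ((p : ℝ) - 1)) * ‖f' (y k)‖ ^ ((p : ℝ) / ((p : ℝ) - 1)) ≤
      f' (y k) (x k - y k))
    (hx0 : x 0 = gφs (z 0))
    -- x* is a global minimizer of f and ∇φ*(z*) = x*
    (xs : E) (zs : StrongDual ℝ E)
    (hxs : ∀ w, f xs ≤ f w) (hzs : gφs zs = xs)
    (hC : 0 < C) (hCub : C < σ * M ^ (p - 1) / (((p : ℝ) - 1) ^ (p - 1) * (p : ℝ))) :
    Tendsto
      (fun k : ℕ => (k : ℝ) ^ (p + 1) *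
        sInf ((fun i => ‖f' (y i)‖ ^ ((p : ℝ) / ((p : ℝ) - 1))) '' {i : ℕ | i ≤ k}))
      atTop (𝓝 0) :=
  higher_order_mirror_descent_gradient_rate_general p hp s C M σ hs hM hσ f f' hfconv hfd φ φ' hsub
    hφsc gφs hgφs x y z hx hz hy xs zs hxs hzs hC hCub
end
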